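/- Characterization of exactness (corollary of Theorem 2.1): Assume ℓ_L < u_L and ℓ_R < u_R componentwise and let x* ∈ Ω (so in particular φ(x*) = 0). Then there exist multipliers y* making x* a strongly stationary point of the LCQP if and only if there exists ρ̄ > 0 such that for every ρ ≥ ρ̄ there exist multipliers (ȳ_A, ȳ_L, ȳ_R) making x* a KKT point of the penalized problem min_{x ∈ Ω̃} ψ_ρ(x). -/

import Mathlib

open Matrix
open scoped Classical

noncomputable section

structure LCQPData (n nA nc : ℕ) where
  Q : Matrix (Fin n) (Fin n) ℝ
  g : Fin n → ℝ
  A : Matrix (Fin nA) (Fin n) ℝ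
  lA : Fin nA → ℝ
  uA : Fin nA → ℝ
  L : Matrix (Fin nc) (Fin n) ℝ
  R : Matrix (Fin nc) (Fin n) ℝ
  lL : Fin nc → ℝ
  uL : Fin nc → ℝ
  lR : Fin nc → ℝ
  uR : Fin nc → ℝ

variable {n nA nc m : ℕ}

/-- Lower-active set of the constraint `l ≤ M x ≤ u`. -/
def actL (M : Matrix (Fin m) (Fin n) ℝ) (l u : Fin m → ℝ) (x : Fin n → ℝ) : Set (Fin m) :=
  {i | l i = M.mulVec x i ∧ M.mulVec x i < u i}

/-- Upper-active set of the constraint `l ≤ M x ≤ u`. -/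
def actU (M : Matrix (Fin m) (Fin n) ℝ) (l u : Fin m → ℝ) (x : Fin n → ℝ) : Set (Fin m) :=
  {i | l i < M.mulVec x i ∧ M.mulVec x i = u i}

/-- Free (inactive) set of the constraint `l ≤ M x ≤ u`. -/
def actF (M : Matrix (Fin m) (Fin n) ℝ) (l u : Fin m → ℝ) (x : Fin n → ℝ) : Set (Fin m) :=
  {i | l i < M.mulVec x i ∧ M.mulVec x i < u i}

/-- The relaxed feasible set Ω̃. -/
def LCQPData.relFeas (P : LCQPData n nA nc) : Set (Fin n → ℝ) :=
  {x | (∀ i, P.lA i ≤ P.A.mulVec x i ∧ P.A.mulVec x i ≤ P.uA i) ∧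
       (∀ i, P.lL i ≤ P.L.mulVec x i ∧ P.L.mulVec x i ≤ P.uL i) ∧
       (∀ i, P.lR i ≤ P.R.mulVec x i ∧ P.R.mulVec x i ≤ P.uR i)}

/-- The penalty function φ. -/
def LCQPData.phi (P : LCQPData n nA nc) (x : Fin n → ℝ) : ℝ :=
  (P.L.mulVec x - P.lL) ⬝ᵥ (P.R.mulVec x - P.lR)

/-- The LCQP feasible set Ω. -/
def LCQPData.feas (P : LCQPData n nA nc) : Set (Fin n → ℝ) :=
  {x ∈ P.relFeas | P.phi x = 0}

/-- ∇φ(x). -/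
def LCQPData.gradPhi (P : LCQPData n nA nc) (x : Fin n → ℝ) : Fin n → ℝ :=
  P.Lᵀ.mulVec (P.R.mulVec x - P.lR) + P.Rᵀ.mulVec (P.L.mulVec x - P.lL)

/-- The quadratic objective f. -/
def LCQPData.obj (P : LCQPData n nA nc) (x : Fin n → ℝ) : ℝ :=
  (1/2) * (x ⬝ᵥ P.Q.mulVec x) + P.g ⬝ᵥ x

/-- The penalized objective ψ_ρ. -/
def LCQPData.psi (P : LCQPData n nA nc) (ρ : ℝ) (x : Fin n → ℝ) : ℝ :=
  P.obj x + ρ * P.phi x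

/-- ∇ψ_ρ(x). -/
def LCQPData.gradPsi (P : LCQPData n nA nc) (ρ : ℝ) (x : Fin n → ℝ) : Fin n → ℝ :=
  P.Q.mulVec x + P.g + ρ • P.gradPhi x

/-- The convexified inner-loop model ϑ_{x̄,ρ}. -/
def LCQPData.theta (P : LCQPData n nA nc) (ρ : ℝ) (xb x : Fin n → ℝ) : ℝ :=
  (1/2) * (x ⬝ᵥ P.Q.mulVec x) + (P.g + ρ • P.gradPhi xb) ⬝ᵥ x

/-- Strong stationarity of the LCQP. -/
def LCQPData.StrongStat (P : LCQPData n nA nc) (x : Fin n → ℝ)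
    (yA : Fin nA → ℝ) (yL yR : Fin nc → ℝ) : Prop :=
  x ∈ P.feas ∧
  P.Q.mulVec x + P.g = P.Aᵀ.mulVec yA + P.Lᵀ.mulVec yL + P.Rᵀ.mulVec yR ∧
  (∀ i ∈ actF P.A P.lA P.uA x, yA i = 0) ∧
  (∀ i ∈ actL P.A P.lA P.uA x, 0 ≤ yA i) ∧
  (∀ i ∈ actU P.A P.lA P.uA x, yA i ≤ 0) ∧
  (∀ i ∈ actF P.L P.lL P.uL x, yL i = 0) ∧
  (∀ i ∈ actL P.L P.lL P.uL x ∩ actL P.R P.lR P.uR x, 0 ≤ yL i) ∧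
  (∀ i ∈ actU P.L P.lL P.uL x, yL i ≤ 0) ∧
  (∀ i ∈ actF P.R P.lR P.uR x, yR i = 0) ∧
  (∀ i ∈ actL P.L P.lL P.uL x ∩ actL P.R P.lR P.uR x, 0 ≤ yR i) ∧
  (∀ i ∈ actU P.R P.lR P.uR x, yR i ≤ 0)

/-- KKT point of the penalized problem min_{x ∈ Ω̃} ψ_ρ(x). -/
def LCQPData.PenKKT (P : LCQPData n nA nc) (ρ : ℝ) (x : Fin n → ℝ)
    (yA : Fin nA → ℝ) (yL yR : Fin nc → ℝ) : Prop :=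
  x ∈ P.relFeas ∧
  P.Q.mulVec x + P.g + ρ • P.gradPhi x
    = P.Aᵀ.mulVec yA + P.Lᵀ.mulVec yL + P.Rᵀ.mulVec yR ∧
  (∀ i ∈ actF P.A P.lA P.uA x, yA i = 0) ∧
  (∀ i ∈ actL P.A P.lA P.uA x, 0 ≤ yA i) ∧
  (∀ i ∈ actU P.A P.lA P.uA x, yA i ≤ 0) ∧
  (∀ i ∈ actF P.L P.lL P.uL x, yL i = 0) ∧
  (∀ i ∈ actL P.L P.lL P.uL x, 0 ≤ yL i) ∧
  (∀ i ∈ actU P.L P.lL P.uL x, yL i ≤ 0) ∧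
  (∀ i ∈ actF P.R P.lR P.uR x, yR i = 0) ∧
  (∀ i ∈ actL P.R P.lR P.uR x, 0 ≤ yR i) ∧
  (∀ i ∈ actU P.R P.lR P.uR x, yR i ≤ 0)

/-!
The penalty term only reshuffles multipliers: since `∇φ(x) = Lᵀ(Rx − ℓ_R) + Rᵀ(Lx − ℓ_L)`, the
KKT equation of the penalized problem with multipliers `(y_A, y_L + ρ(Rx − ℓ_R), y_R + ρ(Lx − ℓ_L))`
is the strong stationarity equation with `(y_A, y_L, y_R)`. By complementarity at `x ∈ Ω` the shift
vanishes on every index except those where `Lx = ℓ_L` and `Rx > ℓ_R` (or vice versa); there the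
penalized problem asks for a nonnegative multiplier, which the shift provides once `ρ` is large,
while strong stationarity asks nothing. On biactive indices the two sets of sign conditions agree,
because `ℓ < u` makes a biactive index lower-active for both constraints.
-/

open Filter

def slack (M : Matrix (Fin m) (Fin n) ℝ) (l : Fin m → ℝ) (x : Fin n → ℝ) : Fin m → ℝ :=
  M *ᵥ x - l

/-- `S` is where `y` must be nonnegative: `𝓛ˡ(x)` for the penalized problem, `𝓦ˡ(x)` for strong
stationarity. -/
def IsBoundMultiplier (M : Matrix (Fin m) (Fin n) ℝ) (l u : Fin m → ℝ) (x : Fin n → ℝ)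
    (S : Set (Fin m)) (y : Fin m → ℝ) : Prop :=
  (∀ i ∈ actF M l u x, y i = 0) ∧ (∀ i ∈ S, 0 ≤ y i) ∧ (∀ i ∈ actU M l u x, y i ≤ 0)

lemma exists_gt_forall_ge_of_eventually_atTop {α : Type*} [LinearOrder α] [NoMaxOrder α]
    {p : α → Prop} (c : α) (h : ∀ᶠ ρ in atTop, p ρ) : ∃ ρbar > c, ∀ ρ ≥ ρbar, p ρ := by
  have : Nonempty α := ⟨c⟩
  obtain ⟨a, ha⟩ := (h.and (eventually_gt_atTop c)).exists_forall_of_atTop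
  exact ⟨a, (ha a le_rfl).2, fun ρ hρ => (ha ρ hρ).1⟩

lemma mul_eq_zero_of_dotProduct_eq_zero {ι R : Type*} [Fintype ι] [Semiring R] [PartialOrder R]
    [IsOrderedRing R] {a b : ι → R} (ha : 0 ≤ a) (hb : 0 ≤ b) (h : a ⬝ᵥ b = 0) (i : ι) :
    a i * b i = 0 :=
  (Finset.sum_eq_zero_iff_of_nonneg fun j _ => mul_nonneg (ha j) (hb j)).1 h i (Finset.mem_univ i)

section ComplementarityPair

variable {M₁ M₂ : Matrix (Fin m) (Fin n) ℝ} {l₁ u₁ l₂ u₂ : Fin m → ℝ} {x : Fin n → ℝ}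
  {y : Fin m → ℝ}

lemma slack_eq_zero_of_lt (hc : ∀ i, slack M₁ l₁ x i * slack M₂ l₂ x i = 0) {i : Fin m}
    (hi : l₁ i < (M₁ *ᵥ x) i) : slack M₂ l₂ x i = 0 :=
  (mul_eq_zero.1 (hc i)).resolve_left (sub_ne_zero.2 hi.ne')

lemma IsBoundMultiplier.sub_smul_slack (hc : ∀ i, slack M₁ l₁ x i * slack M₂ l₂ x i = 0)
    (hy : IsBoundMultiplier M₁ l₁ u₁ x (actL M₁ l₁ u₁ x) y) (ρ : ℝ) :
    IsBoundMultiplier M₁ l₁ u₁ x (actL M₁ l₁ u₁ x ∩ actL M₂ l₂ u₂ x) (y - ρ • slack M₂ l₂ x) := by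
  obtain ⟨hF, hL, hU⟩ := hy
  refine ⟨fun i hi => ?_, fun i hi => ?_, fun i hi => ?_⟩
  · simp [slack_eq_zero_of_lt hc hi.1, hF i hi]
  · have hzero : slack M₂ l₂ x i = 0 := sub_eq_zero.2 hi.2.1.symm
    simp [hzero, hL i hi.1]
  · simp [slack_eq_zero_of_lt hc hi.1, hU i hi]

lemma IsBoundMultiplier.eventually_add_smul_slack (h₂ : l₂ ≤ M₂ *ᵥ x) (hlu₂ : ∀ i, l₂ i < u₂ i)
    (hc : ∀ i, slack M₁ l₁ x i * slack M₂ l₂ x i = 0)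
    (hy : IsBoundMultiplier M₁ l₁ u₁ x (actL M₁ l₁ u₁ x ∩ actL M₂ l₂ u₂ x) y) :
    ∀ᶠ ρ : ℝ in atTop, IsBoundMultiplier M₁ l₁ u₁ x (actL M₁ l₁ u₁ x) (y + ρ • slack M₂ l₂ x) := by
  obtain ⟨hF, hW, hU⟩ := hy
  have hlower : ∀ᶠ ρ : ℝ in atTop, ∀ i ∈ actL M₁ l₁ u₁ x, 0 ≤ (y + ρ • slack M₂ l₂ x) i := by
    refine eventually_all.2 fun i => ?_
    rcases (h₂ i).eq_or_lt with hbi | hpos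
    · refine .of_forall fun ρ hi => ?_
      have hi₂ : i ∈ actL M₂ l₂ u₂ x := ⟨hbi, hbi ▸ hlu₂ i⟩
      simp [show slack M₂ l₂ x i = 0 from sub_eq_zero.2 hbi.symm, hW i ⟨hi, hi₂⟩]
    · filter_upwards [eventually_ge_atTop (-y i / slack M₂ l₂ x i)] with ρ hρ _
      have := (div_le_iff₀ (show 0 < slack M₂ l₂ x i from sub_pos.2 hpos)).1 hρ
      simp only [Pi.add_apply, Pi.smul_apply, smul_eq_mul]
      linarith
  filter_upwards [hlower] with ρ hρ
  refine ⟨fun i hi => ?_, hρ, fun i hi => ?_⟩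
  · simp [slack_eq_zero_of_lt hc hi.1, hF i hi]
  · simp [slack_eq_zero_of_lt hc hi.1, hU i hi]

end ComplementarityPair

namespace LCQPData

variable (P : LCQPData n nA nc)

lemma strongStat_iff (x : Fin n → ℝ) (yA : Fin nA → ℝ) (yL yR : Fin nc → ℝ) :
    P.StrongStat x yA yL yR ↔ x ∈ P.feas ∧
      P.Q *ᵥ x + P.g = P.Aᵀ *ᵥ yA + P.Lᵀ *ᵥ yL + P.Rᵀ *ᵥ yR ∧
      IsBoundMultiplier P.A P.lA P.uA x (actL P.A P.lA P.uA x) yA ∧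
      IsBoundMultiplier P.L P.lL P.uL x (actL P.L P.lL P.uL x ∩ actL P.R P.lR P.uR x) yL ∧
      IsBoundMultiplier P.R P.lR P.uR x (actL P.R P.lR P.uR x ∩ actL P.L P.lL P.uL x) yR := by
  simp only [StrongStat, IsBoundMultiplier, Set.inter_comm (actL P.R P.lR P.uR x), and_assoc]

lemma penKKT_iff (ρ : ℝ) (x : Fin n → ℝ) (yA : Fin nA → ℝ) (yL yR : Fin nc → ℝ) :
    P.PenKKT ρ x yA yL yR ↔ x ∈ P.relFeas ∧
      P.Q *ᵥ x + P.g + ρ • P.gradPhi x = P.Aᵀ *ᵥ yA + P.Lᵀ *ᵥ yL + P.Rᵀ *ᵥ yR ∧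
      IsBoundMultiplier P.A P.lA P.uA x (actL P.A P.lA P.uA x) yA ∧
      IsBoundMultiplier P.L P.lL P.uL x (actL P.L P.lL P.uL x) yL ∧
      IsBoundMultiplier P.R P.lR P.uR x (actL P.R P.lR P.uR x) yR := by
  simp only [PenKKT, IsBoundMultiplier, and_assoc]

lemma penStationarity_iff (ρ : ℝ) (x : Fin n → ℝ) (yA : Fin nA → ℝ) (yL yR : Fin nc → ℝ) :
    P.Q *ᵥ x + P.g + ρ • P.gradPhi x = P.Aᵀ *ᵥ yA + P.Lᵀ *ᵥ (yL + ρ • slack P.R P.lR x)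
      + P.Rᵀ *ᵥ (yR + ρ • slack P.L P.lL x) ↔
    P.Q *ᵥ x + P.g = P.Aᵀ *ᵥ yA + P.Lᵀ *ᵥ yL + P.Rᵀ *ᵥ yR := by
  have hshift : P.Aᵀ *ᵥ yA + P.Lᵀ *ᵥ (yL + ρ • slack P.R P.lR x)
      + P.Rᵀ *ᵥ (yR + ρ • slack P.L P.lL x)
      = P.Aᵀ *ᵥ yA + P.Lᵀ *ᵥ yL + P.Rᵀ *ᵥ yR + ρ • P.gradPhi x := by
    simp only [gradPhi, slack, mulVec_add, mulVec_smul, smul_add]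
    abel
  rw [hshift, add_left_inj]

lemma slack_mul_slack_eq_zero {x : Fin n → ℝ} (hx : x ∈ P.feas) (i : Fin nc) :
    slack P.L P.lL x i * slack P.R P.lR x i = 0 :=
  mul_eq_zero_of_dotProduct_eq_zero (fun j => sub_nonneg.2 (hx.1.2.1 j).1)
    (fun j => sub_nonneg.2 (hx.1.2.2 j).1) hx.2 i

end LCQPData

theorem exact_penalty_characterization_general (n nA nc : ℕ) (P : LCQPData n nA nc)
    (hLbnd : ∀ i, P.lL i < P.uL i) (hRbnd : ∀ i, P.lR i < P.uR i)
    (xs : Fin n → ℝ) (hxs : xs ∈ P.feas) :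
    (∃ yA yL yR, P.StrongStat xs yA yL yR) ↔
      (∃ ρbar > (0:ℝ), ∀ ρ ≥ ρbar, ∃ ybA ybL ybR, P.PenKKT ρ xs ybA ybL ybR) := by
  have hcL := P.slack_mul_slack_eq_zero hxs
  have hcR : ∀ i, slack P.R P.lR xs i * slack P.L P.lL xs i = 0 :=
    fun i => (mul_comm _ _).trans (hcL i)
  simp only [LCQPData.strongStat_iff, LCQPData.penKKT_iff]
  constructor
  · rintro ⟨yA, yL, yR, -, hstat, hA, hL, hR⟩
    obtain ⟨ρbar, hρbar, hsigns⟩ := exists_gt_forall_ge_of_eventually_atTop 0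
      ((hL.eventually_add_smul_slack (fun i => (hxs.1.2.2 i).1) hRbnd hcL).and
        (hR.eventually_add_smul_slack (fun i => (hxs.1.2.1 i).1) hLbnd hcR))
    exact ⟨ρbar, hρbar, fun ρ hρ => ⟨yA, _, _, hxs.1, (P.penStationarity_iff ..).2 hstat, hA,
      hsigns ρ hρ⟩⟩
  · rintro ⟨ρ, -, hpen⟩
    obtain ⟨yA, yL, yR, -, hstat, hA, hL, hR⟩ := hpen ρ le_rfl
    refine ⟨yA, yL - ρ • slack P.R P.lR xs, yR - ρ • slack P.L P.lL xs, hxs,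
      (P.penStationarity_iff ρ ..).1 ?_, hA, hL.sub_smul_slack hcL ρ, hR.sub_smul_slack hcR ρ⟩
    simpa only [sub_add_cancel] using hstat

/-- Characterization of exactness (corollary of Theorem 2.1). -/
theorem exact_penalty_characterization (n nA nc : ℕ) (P : LCQPData n nA nc)
    (hQ : P.Q.PosDef)
    (hLbnd : ∀ i, P.lL i < P.uL i) (hRbnd : ∀ i, P.lR i < P.uR i)
    (xs : Fin n → ℝ) (hxs : xs ∈ P.feas) :
    (∃ yA yL yR, P.StrongStat xs yA yL yR) ↔
      (∃ ρbar > (0:ℝ), ∀ ρ ≥ ρbar, ∃ ybA ybL ybR, P.PenKKT ρ xs ybA ybL ybR) :=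
  exact_penalty_characterization_general n nA nc P hLbnd hRbnd xs hxs
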